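/- arXiv:2201.04397 — 2 statements merged into one kernel-verified Lean document; each statement's English description precedes it below -/
import Mathlib

section
/- Main two-step projection theorem: for any δ ∈ ℝ^m and ρ > 0, the point obtained by first projecting δ orthogonally onto the zero-mean hyperplane A and then projecting the result onto the closed ball B of radius ρ is a closest point to δ in A ∩ B; i.e., Proj_{A∩B}(δ) = Proj_B(Proj_A(δ)). -/
/-!
Both conclusions follow from the obtuse-angle criterion: if `p ∈ S` and `⟪δ - p, w - p⟫ ≤ 0` for
every `w ∈ S`, then `‖δ - p‖² + ‖w - p‖² ≤ ‖δ - w‖²` on `S`, so `p` is the unique nearest point of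
`S` to `δ`. For `S = n^⊥ ∩ B` and `p = Proj_B (Proj_A δ)` the criterion splits: `δ - Proj_A δ` is a
multiple of `n`, hence orthogonal to `w - p ∈ n^⊥`, and `Proj_A δ - p` satisfies the criterion for
the ball.
-/

open scoped RealInnerProductSpace

variable {E : Type*} [NormedAddCommGroup E] [InnerProductSpace ℝ E]

theorem norm_sub_sq_add_norm_sub_sq_le {δ p w : E} (h : ⟪δ - p, w - p⟫ ≤ 0) :
    ‖δ - p‖ ^ 2 + ‖w - p‖ ^ 2 ≤ ‖δ - w‖ ^ 2 := by
  have := norm_sub_sq_real (δ - p) (w - p)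
  rw [sub_sub_sub_cancel_right] at this
  linarith

theorem norm_sub_le_of_inner_le_zero {δ p w : E} (h : ⟪δ - p, w - p⟫ ≤ 0) :
    ‖δ - p‖ ≤ ‖δ - w‖ :=
  (sq_le_sq₀ (norm_nonneg _) (norm_nonneg _)).mp <|
    (le_add_of_nonneg_right (sq_nonneg _)).trans (norm_sub_sq_add_norm_sub_sq_le h)

theorem eq_of_inner_le_zero_of_norm_sub_le {δ p w : E} (h : ⟪δ - p, w - p⟫ ≤ 0)
    (hw : ‖δ - w‖ ≤ ‖δ - p‖) : w = p := by
  have hsq := norm_sub_sq_add_norm_sub_sq_le h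
  have hwsq : ‖δ - w‖ ^ 2 ≤ ‖δ - p‖ ^ 2 := pow_le_pow_left₀ (norm_nonneg _) hw 2
  have hzero : ‖w - p‖ ^ 2 = 0 := le_antisymm (by linarith) (sq_nonneg _)
  simpa [sub_eq_zero] using hzero

noncomputable def projHyperplane (n δ : E) : E := δ - (⟪n, δ⟫ / ‖n‖ ^ 2) • n

noncomputable def projBall (ρ : ℝ) (w : E) : E := min (ρ / ‖w‖) 1 • w

theorem inner_projHyperplane (n δ : E) : ⟪n, projHyperplane n δ⟫ = 0 := by
  rcases eq_or_ne n 0 with rfl | hn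
  · simp
  · have hn2 : ‖n‖ ^ 2 ≠ 0 := by positivity
    rw [projHyperplane, inner_sub_right, inner_smul_right, real_inner_self_eq_norm_sq,
      div_mul_cancel₀ _ hn2, sub_self]

theorem norm_projBall_le {ρ : ℝ} (hρ : 0 ≤ ρ) (w : E) : ‖projBall ρ w‖ ≤ ρ := by
  rcases eq_or_ne w 0 with rfl | hw
  · simpa [projBall] using hρ
  · have hw' : 0 < ‖w‖ := norm_pos_iff.mpr hw
    rw [projBall, norm_smul, Real.norm_of_nonneg (by positivity)]
    calc min (ρ / ‖w‖) 1 * ‖w‖ ≤ ρ / ‖w‖ * ‖w‖ := by gcongr; exact min_le_left _ _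
      _ = ρ := div_mul_cancel₀ _ hw'.ne'

theorem projBall_of_norm_le {ρ : ℝ} {w : E} (hw : ‖w‖ ≤ ρ) : projBall ρ w = w := by
  rcases eq_or_ne w 0 with rfl | hw0
  · simp [projBall]
  · have hw' : 0 < ‖w‖ := norm_pos_iff.mpr hw0
    rw [projBall, min_eq_right ((one_le_div hw').mpr hw), one_smul]

theorem projBall_of_lt_norm {ρ : ℝ} {w : E} (hw : ρ < ‖w‖) : projBall ρ w = (ρ / ‖w‖) • w := by
  rcases eq_or_ne w 0 with rfl | hw0
  · simp [projBall]
  · rw [projBall, min_eq_left ((div_le_one (norm_pos_iff.mpr hw0)).mpr hw.le)]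

theorem inner_sub_projBall_le {ρ : ℝ} (w : E) {z : E} (hz : ‖z‖ ≤ ρ) :
    ⟪w - projBall ρ w, z - projBall ρ w⟫ ≤ 0 := by
  rcases le_or_gt ‖w‖ ρ with hw | hw
  · simp [projBall_of_norm_le hw]
  · have hw0 : 0 < ‖w‖ := (norm_nonneg z).trans_lt (hz.trans_lt hw)
    have hr : ρ / ‖w‖ ≤ 1 := (div_le_one hw0).mpr hw.le
    have hwz : ⟪w, z⟫ ≤ ‖w‖ * ρ :=
      (real_inner_le_norm w z).trans (mul_le_mul_of_nonneg_left hz (norm_nonneg w))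
    have key : ⟪w - projBall ρ w, z - projBall ρ w⟫
        = (1 - ρ / ‖w‖) * (⟪w, z⟫ - ‖w‖ * ρ) := by
      have hsub : w - (ρ / ‖w‖) • w = (1 - ρ / ‖w‖) • w := by rw [sub_smul, one_smul]
      rw [projBall_of_lt_norm hw, hsub, real_inner_smul_left, inner_sub_right,
        real_inner_smul_right, real_inner_self_eq_norm_sq]
      field_simp
    rw [key]
    exact mul_nonpos_of_nonneg_of_nonpos (sub_nonneg.mpr hr) (sub_nonpos.mpr hwz)

theorem inner_projBall_projHyperplane (ρ : ℝ) (n δ : E) :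
    ⟪n, projBall ρ (projHyperplane n δ)⟫ = 0 := by
  rw [projBall, inner_smul_right, inner_projHyperplane, mul_zero]

theorem inner_sub_projBall_projHyperplane_le (ρ : ℝ) (n δ : E) {w : E} (hwn : ⟪n, w⟫ = 0)
    (hw : ‖w‖ ≤ ρ) :
    ⟪δ - projBall ρ (projHyperplane n δ), w - projBall ρ (projHyperplane n δ)⟫ ≤ 0 := by
  set p := projBall ρ (projHyperplane n δ)
  have hδ : δ - p = (⟪n, δ⟫ / ‖n‖ ^ 2) • n + (projHyperplane n δ - p) := by
    rw [projHyperplane]; abel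
  rw [hδ, inner_add_left, inner_smul_left, inner_sub_right, hwn, inner_projBall_projHyperplane,
    sub_zero, mul_zero, zero_add]
  exact inner_sub_projBall_le _ hw

theorem two_step_projection_eq_exact_projection_general (m : ℕ) (ρ : ℝ) (hρ : 0 < ρ)
    (δ n : EuclideanSpace ℝ (Fin m))
    (δ' : EuclideanSpace ℝ (Fin m)) (hδ' : δ' = δ - (⟪n, δ⟫ / ‖n‖ ^ 2) • n)
    (δ'' : EuclideanSpace ℝ (Fin m)) (hδ'' : δ'' = min (ρ / ‖δ'‖) 1 • δ') :
    (⟪n, δ''⟫ = 0 ∧ ‖δ''‖ ≤ ρ) ∧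
      (∀ z : EuclideanSpace ℝ (Fin m), ⟪n, z⟫ = 0 → ‖z‖ ≤ ρ → ‖δ - δ''‖ ≤ ‖δ - z‖) ∧
      (∀ z : EuclideanSpace ℝ (Fin m), ⟪n, z⟫ = 0 → ‖z‖ ≤ ρ →
        (∀ w : EuclideanSpace ℝ (Fin m), ⟪n, w⟫ = 0 → ‖w‖ ≤ ρ → ‖δ - z‖ ≤ ‖δ - w‖) →
        z = δ'') := by
  obtain rfl : δ'' = projBall ρ (projHyperplane n δ) := by rw [hδ'', hδ']; rfl
  have hmem : ⟪n, projBall ρ (projHyperplane n δ)⟫ = 0 ∧ ‖projBall ρ (projHyperplane n δ)‖ ≤ ρ :=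
    ⟨inner_projBall_projHyperplane ρ n δ, norm_projBall_le hρ.le _⟩
  have hobtuse {z} (hzn : ⟪n, z⟫ = 0) (hz : ‖z‖ ≤ ρ) :=
    inner_sub_projBall_projHyperplane_le ρ n δ hzn hz
  refine ⟨hmem, fun z hzn hz => norm_sub_le_of_inner_le_zero (hobtuse hzn hz), ?_⟩
  intro z hzn hz hmin
  exact eq_of_inner_le_zero_of_norm_sub_le (hobtuse hzn hz) (hmin _ hmem.1 hmem.2)

theorem two_step_projection_eq_exact_projection (m : ℕ) (hm : 1 ≤ m) (ρ : ℝ) (hρ : 0 < ρ)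
    (δ n : EuclideanSpace ℝ (Fin m)) (hn : n = WithLp.toLp 2 (fun _ => (1 : ℝ)))
    (δ' : EuclideanSpace ℝ (Fin m)) (hδ' : δ' = δ - (⟪n, δ⟫ / ‖n‖ ^ 2) • n)
    (δ'' : EuclideanSpace ℝ (Fin m)) (hδ'' : δ'' = min (ρ / ‖δ'‖) 1 • δ') :
    (⟪n, δ''⟫ = 0 ∧ ‖δ''‖ ≤ ρ) ∧
      (∀ z : EuclideanSpace ℝ (Fin m), ⟪n, z⟫ = 0 → ‖z‖ ≤ ρ → ‖δ - δ''‖ ≤ ‖δ - z‖) ∧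
      (∀ z : EuclideanSpace ℝ (Fin m), ⟪n, z⟫ = 0 → ‖z‖ ≤ ρ →
        (∀ w : EuclideanSpace ℝ (Fin m), ⟪n, w⟫ = 0 → ‖w‖ ≤ ρ → ‖δ - z‖ ≤ ‖δ - w‖) →
        z = δ'') :=
  two_step_projection_eq_exact_projection_general m ρ hρ δ n δ' hδ' δ'' hδ''
end

section
/- Distance from δ to the feasible set in Case 1: if ‖P(δ)‖₂ > ρ > 0, then the minimum of ‖δ - z‖₂² over z with nᵀz = 0 and ‖z‖₂ ≤ ρ equals (nᵀδ)²/m + (‖P(δ)‖₂ - ρ)², attained at z* = (ρ/‖P(δ)‖₂)·P(δ). -/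
/-! Write `δ = P δ + c • n` with `c = ⟪n, δ⟫ / ‖n‖²`. For `z ⟂ n`, Pythagoras splits
`‖δ - z‖²` into `⟪n, δ⟫² / m + ‖P δ - z‖²`, so it remains to find the point of the ball of
radius `ρ` nearest to `P δ`; by the reverse triangle inequality this is the radial
projection `(ρ / ‖P δ‖) • P δ`, at distance `‖P δ‖ - ρ`. -/

open scoped RealInnerProductSpace

section InnerProductSpace

variable {E : Type*} [NormedAddCommGroup E] [InnerProductSpace ℝ E]

theorem inner_sub_smul_inner_div_norm_sq_self (v x : E) :
    ⟪v, x - (⟪v, x⟫ / ‖v‖ ^ 2) • v⟫ = 0 := by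
  rcases eq_or_ne v 0 with rfl | hv
  · simp
  rw [inner_sub_right, inner_smul_right, real_inner_self_eq_norm_sq]
  field_simp
  ring

theorem norm_smul_inner_div_norm_sq_sq (v x : E) :
    ‖(⟪v, x⟫ / ‖v‖ ^ 2) • v‖ ^ 2 = ⟪v, x⟫ ^ 2 / ‖v‖ ^ 2 := by
  rcases eq_or_ne v 0 with rfl | hv
  · simp
  rw [norm_smul, Real.norm_eq_abs, mul_pow, sq_abs]
  field_simp

theorem norm_sub_sq_eq_of_inner_eq_zero (v x z : E) (hz : ⟪v, z⟫ = 0) :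
    ‖x - z‖ ^ 2 = ⟪v, x⟫ ^ 2 / ‖v‖ ^ 2 + ‖x - (⟪v, x⟫ / ‖v‖ ^ 2) • v - z‖ ^ 2 := by
  rw [← norm_smul_inner_div_norm_sq_sq v x]
  set c := ⟪v, x⟫ / ‖v‖ ^ 2
  have horth : ⟪c • v, x - c • v - z⟫ = 0 := by
    rw [real_inner_smul_left, inner_sub_right, inner_sub_smul_inner_div_norm_sq_self, hz]
    ring
  rw [show x - z = c • v + (x - c • v - z) by abel]
  linear_combination norm_add_sq_eq_norm_sq_add_norm_sq_real horth

end InnerProductSpace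

section NormedSpace

variable {E : Type*} [NormedAddCommGroup E] [NormedSpace ℝ E]

theorem norm_smul_div_norm_self {ρ : ℝ} (hρ : 0 ≤ ρ) {p : E} (hp : p ≠ 0) :
    ‖(ρ / ‖p‖) • p‖ = ρ := by
  rw [norm_smul, Real.norm_eq_abs, abs_of_nonneg (by positivity)]
  field_simp [norm_ne_zero_iff.2 hp]

theorem norm_sub_smul_div_norm_self {ρ : ℝ} {p : E} (hρp : ρ ≤ ‖p‖) (hp : p ≠ 0) :
    ‖p - (ρ / ‖p‖) • p‖ = ‖p‖ - ρ := by
  have hpos : 0 < ‖p‖ := norm_pos_iff.2 hp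
  have hcoef : 1 - ρ / ‖p‖ = (‖p‖ - ρ) / ‖p‖ := by field_simp
  have hfactor : p - (ρ / ‖p‖) • p = (1 - ρ / ‖p‖) • p := by rw [sub_smul, one_smul]
  rw [hfactor, norm_smul, Real.norm_eq_abs, hcoef,
    abs_of_nonneg (div_nonneg (sub_nonneg.2 hρp) hpos.le)]
  field_simp

end NormedSpace

theorem sq_norm_sub_radius_le_sq_norm_sub {E : Type*} [SeminormedAddCommGroup E] {ρ : ℝ}
    {p z : E} (hρp : ρ ≤ ‖p‖) (hz : ‖z‖ ≤ ρ) :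
    (‖p‖ - ρ) ^ 2 ≤ ‖p - z‖ ^ 2 := by
  have hle : ‖p‖ - ρ ≤ ‖p - z‖ := by linarith [norm_sub_norm_le p z]
  exact pow_le_pow_left₀ (sub_nonneg.2 hρp) hle 2

theorem EuclideanSpace.norm_sq_toLp_const_one (ι : Type*) [Fintype ι] :
    ‖WithLp.toLp 2 (fun _ : ι => (1 : ℝ))‖ ^ 2 = Fintype.card ι := by
  simp [EuclideanSpace.real_norm_sq_eq]

theorem case1_distance_to_feasible_set_general (m : ℕ) (ρ : ℝ) (hρ : 0 < ρ)
    (δ n : EuclideanSpace ℝ (Fin m)) (hn : n = WithLp.toLp 2 (fun _ => (1 : ℝ)))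
    (Pδ : EuclideanSpace ℝ (Fin m)) (hP : Pδ = δ - (⟪n, δ⟫ / ‖n‖ ^ 2) • n)
    (hbig : ρ < ‖Pδ‖)
    (zstar : EuclideanSpace ℝ (Fin m)) (hz : zstar = (ρ / ‖Pδ‖) • Pδ) :
    (⟪n, zstar⟫ = 0 ∧ ‖zstar‖ ≤ ρ ∧
        ‖δ - zstar‖ ^ 2 = ⟪n, δ⟫ ^ 2 / m + (‖Pδ‖ - ρ) ^ 2) ∧
      ∀ z : EuclideanSpace ℝ (Fin m), ⟪n, z⟫ = 0 → ‖z‖ ≤ ρ →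
        ⟪n, δ⟫ ^ 2 / m + (‖Pδ‖ - ρ) ^ 2 ≤ ‖δ - z‖ ^ 2 := by
  have hPδ : Pδ ≠ 0 := norm_pos_iff.1 (hρ.trans hbig)
  have hnorm_n : ‖n‖ ^ 2 = m := by
    rw [hn, EuclideanSpace.norm_sq_toLp_const_one, Fintype.card_fin]
  have hdist : ∀ z, ⟪n, z⟫ = 0 → ‖δ - z‖ ^ 2 = ⟪n, δ⟫ ^ 2 / m + ‖Pδ - z‖ ^ 2 := fun z hzn => by
    rw [norm_sub_sq_eq_of_inner_eq_zero n δ z hzn, ← hP, hnorm_n]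
  have hzstar_perp : ⟪n, zstar⟫ = 0 := by
    rw [hz, inner_smul_right, hP, inner_sub_smul_inner_div_norm_sq_self, mul_zero]
  refine ⟨⟨hzstar_perp, (hz ▸ norm_smul_div_norm_self hρ.le hPδ).le, ?_⟩, fun z hzn hzρ => ?_⟩
  · rw [hdist zstar hzstar_perp, hz, norm_sub_smul_div_norm_self hbig.le hPδ]
  · rw [hdist z hzn]
    exact (add_le_add_iff_left _).2 (sq_norm_sub_radius_le_sq_norm_sub hbig.le hzρ)

theorem case1_distance_to_feasible_set (m : ℕ) (hm : 1 ≤ m) (ρ : ℝ) (hρ : 0 < ρ)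
    (δ n : EuclideanSpace ℝ (Fin m)) (hn : n = WithLp.toLp 2 (fun _ => (1 : ℝ)))
    (Pδ : EuclideanSpace ℝ (Fin m)) (hP : Pδ = δ - (⟪n, δ⟫ / ‖n‖ ^ 2) • n)
    (hbig : ρ < ‖Pδ‖)
    (zstar : EuclideanSpace ℝ (Fin m)) (hz : zstar = (ρ / ‖Pδ‖) • Pδ) :
    (⟪n, zstar⟫ = 0 ∧ ‖zstar‖ ≤ ρ ∧
        ‖δ - zstar‖ ^ 2 = ⟪n, δ⟫ ^ 2 / m + (‖Pδ‖ - ρ) ^ 2) ∧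
      ∀ z : EuclideanSpace ℝ (Fin m), ⟪n, z⟫ = 0 → ‖z‖ ≤ ρ →
        ⟪n, δ⟫ ^ 2 / m + (‖Pδ‖ - ρ) ^ 2 ≤ ‖δ - z‖ ^ 2 :=
  case1_distance_to_feasible_set_general m ρ hρ δ n hn Pδ hP hbig zstar hz
end
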